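/- arXiv:2503.17969 — 3 statements merged into one kernel-verified Lean document; each statement's English description precedes it below -/
import Mathlib

section
/- Let K ⊆ 2^ω be compact and for each i ∈ ω let ⟨U^i_m : m ∈ ω⟩ be a sequence of finite subsets of 2^ω such that for every i and every n, U^i_m ⊆ O_n(K) for all but finitely many m. Then for every i there exists m_i ∈ ω such that K ∪ ⋃_{i∈ω} ⋃_{m ≥ m_i} U^i_m is compact. -/
open Set Filter

def cylO (n : ℕ) (K : Set (ℕ → Bool)) : Set (ℕ → Bool) :=
  {z | ∃ y ∈ K, ∀ i < n, z i = y i}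

theorem stmt1 (K : Set (ℕ → Bool)) (hK : IsCompact K)
    (U : ℕ → ℕ → Set (ℕ → Bool)) (hfin : ∀ i m, (U i m).Finite)
    (h : ∀ i n, ∀ᶠ m in atTop, U i m ⊆ cylO n K) :
    ∃ m₀ : ℕ → ℕ, IsCompact (K ∪ ⋃ i, ⋃ m ∈ {m | m₀ i ≤ m}, U i m) := by
  choose m₀ hm₀ using fun i => eventually_atTop.mp (h i i)
  refine ⟨m₀, ?_⟩
  set S : Set (ℕ → Bool) := K ∪ ⋃ i, ⋃ m ∈ {m | m₀ i ≤ m}, U i m with hSdef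
  have hclosed : IsClosed S := by
    rw [← isOpen_compl_iff, isOpen_iff_mem_nhds]
    intro z hz
    have hzK : z ∉ K := fun hk => hz (Or.inl hk)
    obtain ⟨I, u, hu, hsub⟩ := (isOpen_pi_iff.mp hK.isClosed.isOpen_compl) z hzK
    set n := (I.sup id) + 1 with hn
    -- any point agreeing with z on the first n coordinates is not in K
    have hcylK : ∀ w : ℕ → Bool, (∀ j < n, w j = z j) → w ∉ K := by
      intro w hw hwK
      refine hsub (fun a ha => ?_) hwK
      have : w a = z a := hw a (Nat.lt_succ_of_le (Finset.le_sup (f := id) ha))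
      rw [this]
      exact (hu a ha).2
    choose g hg using fun i => eventually_atTop.mp (h i n)
    set F : Set (ℕ → Bool) := ⋃ i ∈ Set.Iio n, ⋃ m ∈ Set.Ico (m₀ i) (g i), U i m with hF
    have hFfin : F.Finite :=
      (Set.finite_Iio n).biUnion fun i _ => (Set.finite_Ico _ _).biUnion fun m _ => hfin i m
    have hFS : F ⊆ S := by
      intro w hw
      simp only [hF, mem_iUnion, mem_Iio, mem_Ico, exists_prop] at hw
      obtain ⟨i, _, m, ⟨hm1, _⟩, hwm⟩ := hw
      exact Or.inr (mem_iUnion.mpr ⟨i, mem_iUnion.mpr ⟨m, mem_iUnion.mpr ⟨hm1, hwm⟩⟩⟩)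
    set C : Set (ℕ → Bool) := {w | ∀ j < n, w j = z j} with hC
    have hCopen : IsOpen C := by
      have : C = ⋂ j ∈ Finset.range n, (fun w : ℕ → Bool => w j) ⁻¹' {z j} := by
        ext w; simp [hC]
      rw [this]
      exact isOpen_biInter_finset fun j _ =>
        (continuous_apply j).isOpen_preimage _ (isOpen_discrete _)
    -- C \ F is an open neighborhood of z contained in Sᶜ
    have hzC : z ∈ C \ F := ⟨fun j _ => rfl, fun hzF => hz (hFS hzF)⟩
    have hopen : IsOpen (C \ F) := hCopen.sdiff hFfin.isClosed
    refine Filter.mem_of_superset (hopen.mem_nhds hzC) ?_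
    rintro w ⟨hwC, hwF⟩ hwS
    -- derive contradiction: w ∈ S and w agrees with z on first n coords, w ∉ F
    have hnotcylO : w ∉ cylO n K := by
      rintro ⟨y, hyK, hy⟩
      refine hcylK y (fun j hj => ?_) hyK
      rw [← hy j hj]; exact hwC j hj
    rcases hwS with hwK | hwU
    · exact hcylK w hwC hwK
    · simp only [mem_iUnion, mem_setOf_eq, exists_prop] at hwU
      obtain ⟨i, m, hm, hwm⟩ := hwU
      by_cases hin : n ≤ i
      · -- U i m ⊆ cylO i K ⊆ cylO n K
        have : w ∈ cylO i K := hm₀ i m hm hwm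
        obtain ⟨y, hyK, hy⟩ := this
        exact hnotcylO ⟨y, hyK, fun j hj => hy j (lt_of_lt_of_le hj hin)⟩
      · push_neg at hin
        by_cases hmg : g i ≤ m
        · exact hnotcylO (hg i m hmg hwm)
        · push_neg at hmg
          exact hwF (mem_iUnion.mpr ⟨i, mem_iUnion.mpr ⟨hin,
            mem_iUnion.mpr ⟨m, mem_iUnion.mpr ⟨⟨hm, hmg⟩, hwm⟩⟩⟩⟩)
  exact hclosed.isCompact
end

section
/- Suppose b > ω₁. Let Y ⊆ 2^ω be Menger and X ⊆ 2^ω be a space satisfying property (†): for every function M assigning to each countable Q ⊆ X a Menger set M(Q) ⊆ 2^ω disjoint from Q, there exists a family 𝒬 of countable subsets of X with |𝒬| = ω₁ and X ⊆ ⋃_{Q∈𝒬}(2^ω \ M(Q)). If additionally every countable Q ⊆ X has Q × Y Menger, then X × Y is Menger. -/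
open Set Filter

/-- The Menger covering property. -/
def Menger (X : Type*) [TopologicalSpace X] : Prop :=
  ∀ U : ℕ → Set (Set X),
    (∀ n, (∀ u ∈ U n, IsOpen u) ∧ ⋃₀ U n = univ) →
    ∃ V : ℕ → Set (Set X),
      (∀ n, V n ⊆ U n ∧ (V n).Finite) ∧ ⋃ n, ⋃₀ V n = univ

section rM
variable {Z : Type*} {W : Type*} [TopologicalSpace Z] [TopologicalSpace W]

/-- Relative Menger property: covers by ambient open sets. -/
def rM (S : Set Z) : Prop :=
  ∀ U : ℕ → Set (Set Z),
    (∀ n, (∀ u ∈ U n, IsOpen u) ∧ S ⊆ ⋃₀ U n) →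
    ∃ V : ℕ → Set (Set Z),
      (∀ n, V n ⊆ U n ∧ (V n).Finite) ∧ S ⊆ ⋃ n, ⋃₀ V n

lemma menger_of_rM {S : Set Z} (h : rM S) : Menger ↥S := by
  intro U hU
  obtain ⟨V', hV'sub, hV'cov⟩ :=
    h (fun n => {O | IsOpen O ∧ (Subtype.val ⁻¹' O : Set ↥S) ∈ U n}) (by
      intro n
      refine ⟨fun O hO => hO.1, fun s hs => ?_⟩
      have : (⟨s, hs⟩ : ↥S) ∈ ⋃₀ U n := by rw [(hU n).2]; trivial
      obtain ⟨u, hu, hsu⟩ := this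
      obtain ⟨O, hOopen, rfl⟩ := isOpen_induced_iff.mp ((hU n).1 u hu)
      exact ⟨O, ⟨hOopen, hu⟩, hsu⟩)
  refine ⟨fun n => (fun O => (Subtype.val ⁻¹' O : Set ↥S)) '' V' n, fun n => ?_, ?_⟩
  · constructor
    · rintro u ⟨O, hO, rfl⟩
      exact ((hV'sub n).1 hO).2
    · exact ((hV'sub n).2).image _
  · ext x
    simp only [mem_iUnion, mem_sUnion, mem_univ, iff_true]
    obtain ⟨_, ⟨n, rfl⟩, O, hO, hxO⟩ := hV'cov x.2
    exact ⟨n, _, ⟨O, hO, rfl⟩, hxO⟩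

lemma rM_image {S : Set Z} (h : rM S) {f : Z → W} (hf : Continuous f) : rM (f '' S) := by
  intro U hU
  obtain ⟨V, hsub, hcov⟩ := h (fun n => (fun O => f ⁻¹' O) '' U n) (by
    intro n
    refine ⟨by rintro u ⟨O, hO, rfl⟩; exact ((hU n).1 O hO).preimage hf, fun z hz => ?_⟩
    obtain ⟨O, hO, hfzO⟩ := (hU n).2 ⟨z, hz, rfl⟩
    exact ⟨f ⁻¹' O, ⟨O, hO, rfl⟩, hfzO⟩)
  classical
  set pick : ℕ → Set Z → Set W := fun n v =>
      if h : ∃ O ∈ U n, f ⁻¹' O = v then h.choose else ∅ with hpick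
  have pickspec : ∀ n v, v ∈ V n → ∃ O ∈ U n, f ⁻¹' O = v ∧ pick n v = O := by
    intro n v hv
    obtain ⟨O, hO, hOv⟩ := (hsub n).1 hv
    have hex : ∃ O ∈ U n, f ⁻¹' O = v := ⟨O, hO, hOv⟩
    exact ⟨hex.choose, hex.choose_spec.1, hex.choose_spec.2, by simp [hpick, dif_pos hex]⟩
  refine ⟨fun n => pick n '' V n, fun n => ⟨?_, ((hsub n).2).image _⟩, ?_⟩
  · rintro u ⟨v, hv, rfl⟩
    obtain ⟨O, hOU, _, hpv⟩ := pickspec n v hv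
    rw [hpv]; exact hOU
  · rintro w ⟨z, hz, rfl⟩
    obtain ⟨_, ⟨n, rfl⟩, v, hv, hzv⟩ := hcov hz
    obtain ⟨O, hOU, hOv, hpv⟩ := pickspec n v hv
    rw [← hOv] at hzv
    exact mem_iUnion.2 ⟨n, ⟨pick n v, ⟨v, hv, rfl⟩, by rw [hpv]; exact hzv⟩⟩

lemma rM_univ_of_menger {h : Menger Z} : rM (univ : Set Z) := by
  intro U hU
  obtain ⟨V, hsub, hcov⟩ := h U (fun n => ⟨(hU n).1, univ_subset_iff.mp (hU n).2⟩)
  exact ⟨V, hsub, by rw [hcov]⟩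

lemma rM_of_menger {S : Set Z} (h : Menger ↥S) : rM S := by
  have := rM_image (rM_univ_of_menger (h := h)) continuous_subtype_val
  rwa [image_univ, Subtype.range_val] at this

lemma rM_inter_closed {S : Set Z} (h : rM S) {F : Set Z} (hF : IsClosed F) : rM (S ∩ F) := by
  intro U hU
  obtain ⟨V, hsub, hcov⟩ := h (fun n => U n ∪ {Fᶜ}) (by
    intro n
    refine ⟨?_, fun s hs => ?_⟩
    · rintro u (hu | hu)
      · exact (hU n).1 u hu
      · rw [mem_singleton_iff.mp hu]; exact hF.isOpen_compl
    · by_cases hsF : s ∈ F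
      · obtain ⟨u, hu, hsu⟩ := (hU n).2 ⟨hs, hsF⟩
        exact ⟨u, Or.inl hu, hsu⟩
      · exact ⟨Fᶜ, Or.inr rfl, hsF⟩)
  refine ⟨fun n => V n ∩ U n,
    fun n => ⟨inter_subset_right, ((hsub n).2).subset inter_subset_left⟩, ?_⟩
  rintro x hx
  obtain ⟨_, ⟨n, rfl⟩, v, hv, hxv⟩ := hcov hx.1
  rcases (hsub n).1 hv with hvU | hvC
  · exact mem_iUnion.2 ⟨n, v, ⟨hv, hvU⟩, hxv⟩
  · rw [mem_singleton_iff.mp hvC] at hxv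
    exact absurd hx.2 hxv

lemma rM_iUnion {S : ℕ → Set Z} (h : ∀ i, rM (S i)) : rM (⋃ i, S i) := by
  intro U hU
  have h' : ∀ i, ∃ V : ℕ → Set (Set Z),
      (∀ m, V m ⊆ U (Nat.pair i m) ∧ (V m).Finite) ∧ S i ⊆ ⋃ m, ⋃₀ V m := fun i =>
    h i (fun m => U (Nat.pair i m))
      (fun m => ⟨(hU _).1, fun s hs => (hU _).2 (mem_iUnion.2 ⟨i, hs⟩)⟩)
  choose V hV1 hV2 using h'
  refine ⟨fun n => V n.unpair.1 n.unpair.2, fun n => ?_, ?_⟩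
  · have := hV1 n.unpair.1 n.unpair.2
    rwa [Nat.pair_unpair] at this
  · rintro x hx
    obtain ⟨i, hxi⟩ := mem_iUnion.mp hx
    obtain ⟨_, ⟨m, rfl⟩, hm⟩ := hV2 i hxi
    refine mem_iUnion.2 ⟨Nat.pair i m, ?_⟩
    simpa [Nat.unpair_pair] using hm

lemma rM_univ_prod [CompactSpace Z] {Y : Set W} (h : rM Y) :
    rM ((univ : Set Z) ×ˢ Y) := by
  intro U hU
  classical
  obtain ⟨Wn, hWsub, hWcov⟩ :=
    h (fun n => {O | IsOpen O ∧ ∃ F, F ⊆ U n ∧ F.Finite ∧ (univ : Set Z) ×ˢ O ⊆ ⋃₀ F}) (by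
    intro n
    refine ⟨fun O hO => hO.1, fun y hy => ?_⟩
    have hk : ∀ k : Z, ∃ (A : Set Z) (B : Set W), IsOpen A ∧ IsOpen B ∧ k ∈ A ∧ y ∈ B ∧
        ∃ u ∈ U n, A ×ˢ B ⊆ u := by
      intro k
      obtain ⟨u, hu, hku⟩ := (hU n).2 (⟨mem_univ k, hy⟩ : (k, y) ∈ _ ×ˢ Y)
      obtain ⟨A, B, hA, hB, hkA, hyB, hABu⟩ := isOpen_prod_iff.mp ((hU n).1 u hu) k y hku
      exact ⟨A, B, hA, hB, hkA, hyB, u, hu, hABu⟩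
    choose A B hA hB hkA hyB u hu hABu using hk
    obtain ⟨t, ht⟩ := isCompact_univ.elim_finite_subcover A hA
      (fun k _ => mem_iUnion.2 ⟨k, hkA k⟩)
    refine ⟨⋂ k ∈ t, B k, ⟨isOpen_biInter_finset (fun k _ => hB k), u '' ↑t,
      by rintro _ ⟨k, _, rfl⟩; exact hu k, (t.finite_toSet).image _, ?_⟩, ?_⟩
    · rintro ⟨z, w⟩ ⟨-, hwB⟩
      obtain ⟨_, ⟨k, rfl⟩, hzk⟩ := ht (mem_univ z)
      simp only [mem_iUnion, exists_prop] at hzk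
      obtain ⟨hkt, hzA⟩ := hzk
      exact ⟨u k, ⟨k, hkt, rfl⟩, hABu k ⟨hzA, by simpa using (mem_iInter₂.mp hwB) k hkt⟩⟩
    · exact mem_iInter₂.mpr fun k _ => hyB k)
  set pickF : ℕ → Set W → Set (Set (Z × W)) := fun n O =>
    if h : ∃ F, F ⊆ U n ∧ F.Finite ∧ (univ : Set Z) ×ˢ O ⊆ ⋃₀ F then h.choose else ∅
    with hpickF
  have pickspec : ∀ n O, O ∈ Wn n →
      pickF n O ⊆ U n ∧ (pickF n O).Finite ∧ (univ : Set Z) ×ˢ O ⊆ ⋃₀ pickF n O := by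
    intro n O hO
    have hex := ((hWsub n).1 hO).2
    simp only [hpickF, dif_pos hex]
    exact hex.choose_spec
  refine ⟨fun n => ⋃₀ (pickF n '' Wn n), fun n => ⟨?_, ?_⟩, ?_⟩
  · rintro u ⟨F, ⟨O, hO, rfl⟩, huF⟩
    exact (pickspec n O hO).1 huF
  · refine Finite.sUnion (((hWsub n).2).image _) ?_
    rintro F ⟨O, hO, rfl⟩
    exact (pickspec n O hO).2.1
  · rintro ⟨z, w⟩ ⟨_, hw⟩
    obtain ⟨_, ⟨n, rfl⟩, O, hO, hwO⟩ := hWcov hw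
    obtain ⟨u, hu, hzu⟩ := (pickspec n O hO).2.2 (⟨mem_univ z, hwO⟩ : (z, w) ∈ _ ×ˢ O)
    exact mem_iUnion.2 ⟨n, u, ⟨pickF n O, ⟨O, hO, rfl⟩, hu⟩, hzu⟩

omit [TopologicalSpace Z] in
lemma exists_bound_of_finite {E : ℕ → Set Z} (hmono : Monotone E) (V : Set (Set Z))
    (hfin : V.Finite) (hsub : V ⊆ range E) : ∃ K, ⋃₀ V ⊆ E K := by
  classical
  set idx : Set Z → ℕ := fun v => if h : ∃ k, E k = v then h.choose else 0 with hidx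
  have hspec : ∀ v ∈ V, E (idx v) = v := by
    intro v hv
    obtain ⟨k, hk⟩ := hsub hv
    have hex : ∃ k, E k = v := ⟨k, hk⟩
    simp only [hidx, dif_pos hex]
    exact hex.choose_spec
  obtain ⟨K, hK⟩ := (hfin.image idx).bddAbove
  refine ⟨K, ?_⟩
  rintro x ⟨v, hv, hxv⟩
  rw [← hspec v hv] at hxv
  exact hmono (hK ⟨v, hv, rfl⟩) hxv

end rM

/-- The Hurewicz covering property. -/
def Hurewicz (X : Type*) [TopologicalSpace X] : Prop :=
  ∀ U : ℕ → Set (Set X),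
    (∀ n, (∀ u ∈ U n, IsOpen u) ∧ ⋃₀ U n = univ) →
    ∃ V : ℕ → Set (Set X),
      (∀ n, V n ⊆ U n ∧ (V n).Finite) ∧ ∀ x : X, ∀ᶠ n in atTop, x ∈ ⋃₀ V n

open Cardinal in
theorem stmt16
    (hb : ∀ F : Set (ℕ → ℕ), #F ≤ aleph 1 →
      ∃ g : ℕ → ℕ, ∀ f ∈ F, ∀ᶠ n in atTop, f n ≤ g n)
    (X Y : Set (ℕ → Bool)) (hY : Menger Y)
    (hdagger : ∀ M : Set (ℕ → Bool) → Set (ℕ → Bool),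
      (∀ Q, Q ⊆ X → Q.Countable → Menger (M Q) ∧ M Q ∩ Q = ∅) →
      ∃ 𝒬 : Set (Set (ℕ → Bool)), #𝒬 = aleph 1 ∧
        (∀ Q ∈ 𝒬, Q ⊆ X ∧ Q.Countable) ∧
        X ⊆ ⋃ Q ∈ 𝒬, (univ \ M Q))
    (hprod : ∀ Q, Q ⊆ X → Q.Countable → Menger ↥(Q ×ˢ Y)) :
    Menger ↥(X ×ˢ Y) := by
  classical
  apply menger_of_rM
  intro U hU
  by_cases hne : (X ×ˢ Y).Nonempty
  swap
  · refine ⟨fun _ => ∅, fun n => ⟨empty_subset _, finite_empty⟩, ?_⟩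
    rw [not_nonempty_iff_eq_empty] at hne
    rw [hne]; exact empty_subset _
  -- countable refinement of the covers
  have hDn : ∀ n, ∃ D : ℕ → Set ((ℕ → Bool) × (ℕ → Bool)),
      (∀ k, D k ∈ U n) ∧ X ×ˢ Y ⊆ ⋃ k, D k := by
    intro n
    obtain ⟨T, hTc, hTsub, hTeq⟩ := TopologicalSpace.isOpen_sUnion_countable (U n) (hU n).1
    have hTne : T.Nonempty := by
      obtain ⟨p, hp⟩ := hne
      have hp2 : p ∈ ⋃₀ T := by rw [hTeq]; exact (hU n).2 hp
      obtain ⟨t, ht, -⟩ := hp2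
      exact ⟨t, ht⟩
    obtain ⟨D, hD⟩ := hTc.exists_eq_range hTne
    refine ⟨D, fun k => hTsub (hD ▸ mem_range_self k), ?_⟩
    intro p hp
    have hp2 : p ∈ ⋃₀ T := by rw [hTeq]; exact (hU n).2 hp
    rwa [hD, sUnion_range] at hp2
  choose D hD1 hD2 using hDn
  set E : ℕ → ℕ → Set ((ℕ → Bool) × (ℕ → Bool)) :=
    fun n k => ⋃ j ∈ Finset.range (k + 1), D n j with hE
  have hEopen : ∀ n k, IsOpen (E n k) :=
    fun n k => isOpen_biUnion fun j _ => (hU n).1 _ (hD1 n j)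
  have hEmono : ∀ n, Monotone (E n) := by
    intro n k k' hkk' p hp
    simp only [hE, mem_iUnion, Finset.mem_range] at hp ⊢
    obtain ⟨j, hj, hpj⟩ := hp
    exact ⟨j, by omega, hpj⟩
  have hEcov : ∀ n, X ×ˢ Y ⊆ ⋃ k, E n k := by
    intro n p hp
    obtain ⟨_, ⟨k, rfl⟩, hk⟩ := hD2 n hp
    refine mem_iUnion.2 ⟨k, ?_⟩
    simp only [hE, mem_iUnion, Finset.mem_range]
    exact ⟨k, by omega, hk⟩
  set Wset : (ℕ → ℕ) → Set ((ℕ → Bool) × (ℕ → Bool)) :=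
    fun f => {p | ∀ m, ∃ n, m ≤ n ∧ p ∈ E n (f n)} with hWdef
  have hWmono : ∀ f g : ℕ → ℕ, (∀ᶠ n in atTop, f n ≤ g n) → Wset f ⊆ Wset g := by
    intro f g hfg p hp m
    obtain ⟨N, hN⟩ := eventually_atTop.mp hfg
    obtain ⟨n, hn, hpn⟩ := hp (max m N)
    exact ⟨n, le_trans (le_max_left m N) hn,
      hEmono n (hN n (le_trans (le_max_right m N) hn)) hpn⟩
  have hQW : ∀ Q, Q ⊆ X → Q.Countable → ∃ f, Q ×ˢ Y ⊆ Wset f := by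
    intro Q hQX hQc
    have hrm : rM (Q ×ˢ Y) := rM_of_menger (hprod Q hQX hQc)
    have hm : ∀ m : ℕ, ∃ f : ℕ → ℕ, Q ×ˢ Y ⊆ ⋃ i, E (Nat.pair m i) (f i) := by
      intro m
      obtain ⟨V, hVsub, hVcov⟩ := hrm (fun i => range (E (Nat.pair m i))) (by
        intro i
        refine ⟨by rintro u ⟨k, rfl⟩; exact hEopen _ _, fun p hp => ?_⟩
        have hp' : p ∈ ⋃ k, E (Nat.pair m i) k :=
          hEcov _ (prod_mono hQX subset_rfl hp)
        obtain ⟨_, ⟨k, rfl⟩, hk⟩ := hp'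
        exact ⟨E (Nat.pair m i) k, mem_range_self k, hk⟩)
      have hbd : ∀ i, ∃ K, ⋃₀ V i ⊆ E (Nat.pair m i) K := fun i =>
        exists_bound_of_finite (hEmono _) _ (hVsub i).2 (hVsub i).1
      choose f hf using hbd
      refine ⟨f, fun p hp => ?_⟩
      obtain ⟨_, ⟨i, rfl⟩, hpi⟩ := hVcov hp
      exact mem_iUnion.2 ⟨i, hf i hpi⟩
    choose fm hfm using hm
    refine ⟨fun n => fm n.unpair.1 n.unpair.2, fun p hp m => ?_⟩
    obtain ⟨_, ⟨i, rfl⟩, hpi⟩ := hfm m hp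
    refine ⟨Nat.pair m i, Nat.left_le_pair m i, ?_⟩
    simpa [Nat.unpair_pair] using hpi
  choose FQ hFQ using hQW
  set Mf : Set (ℕ → Bool) → Set (ℕ → Bool) := fun Q =>
    if h : Q ⊆ X ∧ Q.Countable then
      Prod.fst '' (((univ : Set (ℕ → Bool)) ×ˢ Y) \ Wset (FQ Q h.1 h.2)) else ∅ with hMf
  have hMprem : ∀ Q, Q ⊆ X → Q.Countable → Menger ↥(Mf Q) ∧ Mf Q ∩ Q = ∅ := by
    intro Q h1 h2
    have hQ : Q ⊆ X ∧ Q.Countable := ⟨h1, h2⟩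
    have hMfQ : Mf Q =
        Prod.fst '' (((univ : Set (ℕ → Bool)) ×ˢ Y) \ Wset (FQ Q hQ.1 hQ.2)) := dif_pos hQ
    rw [hMfQ]
    constructor
    · apply menger_of_rM
      have hdecomp : ((univ : Set (ℕ → Bool)) ×ˢ Y) \ Wset (FQ Q hQ.1 hQ.2) =
          ⋃ m, (((univ : Set (ℕ → Bool)) ×ˢ Y) ∩
            {p | ∀ n, m ≤ n → p ∉ E n (FQ Q hQ.1 hQ.2 n)}) := by
        ext p
        simp only [mem_diff, hWdef, mem_setOf_eq, mem_iUnion, mem_inter_iff]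
        constructor
        · rintro ⟨hp1, hp2⟩
          push_neg at hp2
          obtain ⟨m, hm⟩ := hp2
          exact ⟨m, hp1, fun n hn => hm n hn⟩
        · rintro ⟨m, hp1, hm⟩
          refine ⟨hp1, fun hp2 => ?_⟩
          obtain ⟨n, hn, hpn⟩ := hp2 m
          exact hm n hn hpn
      rw [hdecomp, image_iUnion]
      apply rM_iUnion
      intro m
      apply rM_image _ continuous_fst
      have hcl : IsClosed {p : (ℕ → Bool) × (ℕ → Bool) |
          ∀ n, m ≤ n → p ∉ E n (FQ Q hQ.1 hQ.2 n)} := by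
        have heq : {p : (ℕ → Bool) × (ℕ → Bool) | ∀ n, m ≤ n → p ∉ E n (FQ Q hQ.1 hQ.2 n)} =
            (⋃ n, ⋃ _ : m ≤ n, E n (FQ Q hQ.1 hQ.2 n))ᶜ := by
          ext p
          simp only [mem_setOf_eq, mem_compl_iff, mem_iUnion, not_exists]
        rw [heq]
        exact (isOpen_iUnion fun n => isOpen_iUnion fun _ => hEopen _ _).isClosed_compl
      exact rM_inter_closed (rM_univ_prod (rM_of_menger hY)) hcl
    · ext x
      simp only [mem_inter_iff, mem_empty_iff_false, iff_false, not_and, mem_image]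
      rintro ⟨p, hp, rfl⟩ hxQ
      exact hp.2 (hFQ Q hQ.1 hQ.2 (mem_prod.mpr ⟨hxQ, hp.1.2⟩))
  obtain ⟨𝒬, h𝒬card, h𝒬mem, h𝒬cov⟩ := hdagger Mf hMprem
  set G : ↥𝒬 → (ℕ → ℕ) := fun Q => FQ Q (h𝒬mem Q Q.2).1 (h𝒬mem Q Q.2).2 with hG
  obtain ⟨g, hg⟩ := hb (range G) (le_trans Cardinal.mk_range_le (le_of_eq h𝒬card))
  have hXYW : X ×ˢ Y ⊆ Wset g := by
    rintro ⟨x, y⟩ hp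
    rw [mem_prod] at hp
    obtain ⟨hx, hy⟩ := hp
    have hx' := h𝒬cov hx
    simp only [mem_iUnion, exists_prop] at hx'
    obtain ⟨Q, hQ𝒬, hxQ⟩ := hx'
    have h1 := (h𝒬mem Q hQ𝒬).1
    have h2 := (h𝒬mem Q hQ𝒬).2
    have hxM : x ∉ Mf Q := hxQ.2
    rw [show Mf Q = Prod.fst '' (((univ : Set (ℕ → Bool)) ×ˢ Y) \ Wset (FQ Q h1 h2)) from
      dif_pos ⟨h1, h2⟩] at hxM
    rw [mem_image] at hxM
    push_neg at hxM
    have hW' : (x, y) ∈ Wset (FQ Q h1 h2) := by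
      by_contra hc
      exact hxM (x, y) ⟨mem_prod.mpr ⟨mem_univ x, hy⟩, hc⟩ rfl
    exact hWmono _ _ (hg (G ⟨Q, hQ𝒬⟩) ⟨⟨Q, hQ𝒬⟩, rfl⟩) hW'
  refine ⟨fun n => D n '' {j | j ≤ g n}, fun n => ⟨?_, (finite_Iic (g n)).image _⟩, ?_⟩
  · rintro u ⟨j, hj, rfl⟩; exact hD1 n j
  · intro p hp
    obtain ⟨n, -, hpn⟩ := hXYW hp 0
    simp only [hE, mem_iUnion, Finset.mem_range] at hpn
    obtain ⟨j, hj, hpj⟩ := hpn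
    exact mem_iUnion.2 ⟨n, D n j, ⟨j, (by omega : j ≤ g n), rfl⟩, hpj⟩
end

section
/- Let X, Y ⊆ 2^ω, where subsets of ω are identified with their characteristic functions, and suppose X ⊕ Y ⊆ [ω]^ω (every coordinatewise mod-2 sum x ⊕ y with x ∈ X, y ∈ Y is the characteristic function of an infinite set) and X ⊕ Y is a dominating family (identifying infinite sets with their increasing enumerations). Then X × Y is not Menger. -/
open Set Filter

/-- `Nat.count` only depends on values of the predicate below the bound. -/
lemma count_congr_below {p q : ℕ → Prop} [DecidablePred p] [DecidablePred q] (m : ℕ)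
    (h : ∀ k < m, (p k ↔ q k)) : Nat.count p m = Nat.count q m := by
  induction m with
  | zero => simp
  | succ n ih =>
    rw [Nat.count_succ, Nat.count_succ, ih (fun k hk => h k (hk.trans n.lt_succ_self)),
      if_congr (h n n.lt_succ_self) rfl rfl]

/-- A finite family of sets from a monotone range is contained in a single member. -/
lemma exists_bound {α : Type*} (h : ℕ → Set α) (mono : Monotone h) (V : Set (Set α))
    (hV : V.Finite) (hsub : V ⊆ Set.range h) : ∃ b, ⋃₀ V ⊆ h b := by
  classical
  set φ : Set α → ℕ := fun v => sInf {m | h m = v} with hφ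
  obtain ⟨b, hb⟩ := (hV.image φ).bddAbove
  refine ⟨b, ?_⟩
  rintro x ⟨v, hv, hxv⟩
  have hne : {m | h m = v}.Nonempty := hsub hv
  have hval : h (φ v) = v := Nat.sInf_mem hne
  have hle : φ v ≤ b := hb (Set.mem_image_of_mem φ hv)
  have : x ∈ h (φ v) := by rw [hval]; exact hxv
  exact mono hle this

theorem stmt19 (X Y : Set (ℕ → Bool))
    (hinf : ∀ x ∈ X, ∀ y ∈ Y, {n | xor (x n) (y n) = true}.Infinite)
    (hdom : ∀ g : ℕ → ℕ, ∃ x ∈ X, ∃ y ∈ Y,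
      ∀ᶠ n in atTop, g n ≤ Nat.nth (fun k => xor (x k) (y k) = true) n) :
    ¬ Menger ↥(X ×ˢ Y) := by
  classical
  intro hM
  let Z := ↥(X ×ˢ Y)
  let P : Z → ℕ → Prop := fun p k => xor (p.1.1 k) (p.1.2 k) = true
  have hPinf : ∀ p : Z, (setOf (P p)).Infinite := fun p => hinf _ p.2.1 _ p.2.2
  have key : ∀ N : ℕ, ∃ gN : ℕ → ℕ, ∀ p : Z, ∃ j, j + N < Nat.count (P p) (gN j) := by
    intro N
    let S : ℕ → ℕ → Set Z := fun j m => {p | j + N < Nat.count (P p) m}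
    have hSmono : ∀ j, Monotone (S j) := by
      intro j m m' hmm' p hp
      exact lt_of_lt_of_le hp (Nat.count_monotone _ hmm')
    have hSopen : ∀ j m, IsOpen (S j m) := by
      intro j m
      have hA : IsOpen {q : (ℕ → Bool) × (ℕ → Bool) |
          j + N < Nat.count (fun k => xor (q.1 k) (q.2 k) = true) m} := by
        rw [isOpen_iff_mem_nhds]
        intro q hq
        have hCopen : IsOpen {q' : (ℕ → Bool) × (ℕ → Bool) |
            ∀ k ∈ Finset.range m, q'.1 k = q.1 k ∧ q'.2 k = q.2 k} := by
          have heq : {q' : (ℕ → Bool) × (ℕ → Bool) |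
              ∀ k ∈ Finset.range m, q'.1 k = q.1 k ∧ q'.2 k = q.2 k}
              = ⋂ k ∈ Finset.range m,
                ({q' : (ℕ → Bool) × (ℕ → Bool) | q'.1 k = q.1 k} ∩
                 {q' : (ℕ → Bool) × (ℕ → Bool) | q'.2 k = q.2 k}) := by
            ext q'; simp [Set.mem_iInter]
          rw [heq]
          refine isOpen_biInter_finset fun k _ => IsOpen.inter ?_ ?_
          · have h1 : {q' : (ℕ → Bool) × (ℕ → Bool) | q'.1 k = q.1 k}
                = (fun q' : (ℕ → Bool) × (ℕ → Bool) => q'.1 k) ⁻¹' {q.1 k} := rfl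
            rw [h1]
            exact IsOpen.preimage ((continuous_apply k).comp continuous_fst)
              (isOpen_discrete _)
          · have h2 : {q' : (ℕ → Bool) × (ℕ → Bool) | q'.2 k = q.2 k}
                = (fun q' : (ℕ → Bool) × (ℕ → Bool) => q'.2 k) ⁻¹' {q.2 k} := rfl
            rw [h2]
            exact IsOpen.preimage ((continuous_apply k).comp continuous_snd)
              (isOpen_discrete _)
        refine Filter.mem_of_superset (hCopen.mem_nhds ?_) ?_
        · intro k _; exact ⟨rfl, rfl⟩
        · intro q' hq'
          have : Nat.count (fun k => xor (q'.1 k) (q'.2 k) = true) m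
              = Nat.count (fun k => xor (q.1 k) (q.2 k) = true) m := by
            refine count_congr_below m fun k hk => ?_
            obtain ⟨h1, h2⟩ := hq' k (Finset.mem_range.2 hk)
            rw [h1, h2]
          show j + N < Nat.count (fun k => xor (q'.1 k) (q'.2 k) = true) m
          rw [this]
          exact hq
      have : S j m = Subtype.val ⁻¹' {q : (ℕ → Bool) × (ℕ → Bool) |
          j + N < Nat.count (fun k => xor (q.1 k) (q.2 k) = true) m} := rfl
      rw [this]
      exact hA.preimage continuous_subtype_val
    obtain ⟨V, hV1, hV2⟩ := hM (fun j => Set.range (S j)) (by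
      intro j
      constructor
      · rintro u ⟨m, rfl⟩; exact hSopen j m
      · apply Set.eq_univ_of_forall
        intro p
        refine Set.mem_sUnion.2 ⟨S j (Nat.nth (P p) (j + N) + 1), ⟨_, rfl⟩, ?_⟩
        show j + N < Nat.count (P p) (Nat.nth (P p) (j + N) + 1)
        rw [Nat.count_nth_succ_of_infinite (hPinf p)]
        exact Nat.lt_succ_self _)
    choose gN hgN using fun j =>
      exists_bound (S j) (hSmono j) (V j) (hV1 j).2 ((hV1 j).1)
    refine ⟨gN, fun p => ?_⟩
    have hp : p ∈ ⋃ j, ⋃₀ V j := hV2 ▸ Set.mem_univ p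
    obtain ⟨j, hj⟩ := Set.mem_iUnion.1 hp
    exact ⟨j, hgN j hj⟩
  choose g hg using key
  let G : ℕ → ℕ := fun n =>
    (Finset.range (n + 1) ×ˢ Finset.range (n + 1)).sup fun q => g q.1 q.2
  obtain ⟨x, hx, y, hy, hev⟩ := hdom G
  let p : Z := ⟨(x, y), Set.mk_mem_prod hx hy⟩
  obtain ⟨M, hM'⟩ := Filter.eventually_atTop.1 hev
  obtain ⟨j, hj⟩ := hg M p
  have hnth : Nat.nth (P p) (j + M) < g M j := Nat.nth_lt_of_lt_count hj
  have hGle : g M j ≤ G (j + M) := by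
    have hmem : (M, j) ∈ Finset.range (j + M + 1) ×ˢ Finset.range (j + M + 1) := by
      simp [Finset.mem_product]
    exact Finset.le_sup (f := fun q : ℕ × ℕ => g q.1 q.2) hmem
  have hfin : G (j + M) ≤ Nat.nth (P p) (j + M) := hM' (j + M) (Nat.le_add_left M j)
  omega
end
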